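/- Let (X, φ) be a permutation rack and T ⊆ X a subset meeting every orbit of φ. Then for n ≥ 1, every n-chain in CR_n(X, φ) is, modulo boundaries (i.e., modulo the image of d : CR_{n+1} → CR_n), a ℤ-linear combination of monomials x₁⋯x_n with x₁ ∈ T. -/

import Mathlib

/-- Rack chains: free abelian group on `n`-tuples. -/
abbrev CR (X : Type) (n : ℕ) : Type := (Fin n → X) →₀ ℤ

/-- The monomial basis element. -/
noncomputable def mon {X : Type} {n : ℕ} (w : Fin n → X) : CR X n := Finsupp.single w 1

/-- Delete the `(i+1)`-st entry (1-indexed `k = i+1`). -/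
def del {X : Type} {n : ℕ} (w : Fin (n+1) → X) (i : Fin n) : Fin n → X :=
  fun j => if (j : ℕ) < (i : ℕ) then w j.castSucc else w j.succ

/-- Delete the `(i+1)`-st entry and act with it on all later entries. -/
def act {X : Type} (op : X → X → X) {n : ℕ} (w : Fin (n+1) → X) (i : Fin n) : Fin n → X :=
  fun j => if (j : ℕ) < (i : ℕ) then w j.castSucc else op (w i.castSucc) (w j.succ)

/-- Rack differential on a monomial. -/
noncomputable def dMon {X : Type} (op : X → X → X) {n : ℕ} (w : Fin (n+1) → X) : CR X n :=
  ∑ i : Fin n, ((-1 : ℤ) ^ (i : ℕ)) • (mon (del w i) - mon (act op w i))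

/-- The rack differential `CR_{n+1} → CR_n`. -/
noncomputable def d {X : Type} (op : X → X → X) (n : ℕ) : CR X (n+1) →+ CR X n :=
  Finsupp.liftAddHom fun w => zmultiplesHom _ (dMon op w)

/-- Left concatenation `w ↦ x·w`. -/
noncomputable def consHom {X : Type} (x : X) (n : ℕ) : CR X n →+ CR X (n+1) :=
  Finsupp.liftAddHom fun w => zmultiplesHom _ (mon (Fin.cons x w))

/-- Diagonal action of a map `φ` on chains. -/
noncomputable def mapChains {X : Type} (φ : X → X) (n : ℕ) : CR X n →+ CR X n :=
  Finsupp.liftAddHom fun w => zmultiplesHom _ (mon (φ ∘ w))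

/-- Cycles. -/
noncomputable def ZC {X : Type} (op : X → X → X) : (n : ℕ) → AddSubgroup (CR X n)
  | 0 => ⊤
  | (m+1) => (d op m).ker

/-- Boundaries. -/
noncomputable def BC {X : Type} (op : X → X → X) (n : ℕ) : AddSubgroup (CR X n) :=
  (d op n).range

/-- Rack homology. -/
abbrev HR (X : Type) (op : X → X → X) (n : ℕ) : Type :=
  ZC op n ⧸ ((BC op n).addSubgroupOf (ZC op n))

/-- The rack operation of a permutation rack. -/
def permOp {X : Type} (φ : X ≃ X) : X → X → X := fun _ y => φ y

/-- Multiplication by an element of `ℤX`. -/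
noncomputable def mulChain {X : Type} (v : X →₀ ℤ) (n : ℕ) : CR X n →+ CR X (n+1) :=
  ∑ x ∈ v.support, v x • consHom x n

/-! The rack identity `d(x·w) = w − (x ▷ w) − x·d(w)` gives, for `x ∈ T`, `c ≡ φ·c` modulo
boundaries plus chains starting in `T`; iterating, `c ≡ φᵏ·c` for every `k : ℤ`. A monomial `w`
is congruent to `φᵏ·w` with `φᵏ (w 0) ∈ T`, which already starts in `T`. -/

section RackChains

variable {X : Type}

theorem CR.addHom_ext {n : ℕ} {M : Type*} [AddCommGroup M] {f g : CR X n →+ M}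
    (h : ∀ w, f (mon w) = g (mon w)) : f = g :=
  Finsupp.addHom_ext' fun w => AddMonoidHom.ext_int (h w)

theorem d_single (op : X → X → X) {n : ℕ} (w : Fin (n+1) → X) (a : ℤ) :
    d op n (Finsupp.single w a) = a • dMon op w := by
  simp [d]

theorem consHom_single (x : X) {n : ℕ} (w : Fin n → X) (a : ℤ) :
    consHom x n (Finsupp.single w a) = Finsupp.single (Fin.cons x w) a := by
  simp [consHom, mon]

theorem mapChains_single (f : X → X) {n : ℕ} (w : Fin n → X) (a : ℤ) :
    mapChains f n (Finsupp.single w a) = Finsupp.single (f ∘ w) a := by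
  simp [mapChains, mon]

theorem mapChains_mapChains (f g : X → X) {n : ℕ} (c : CR X n) :
    mapChains f n (mapChains g n c) = mapChains (f ∘ g) n c := by
  have : (mapChains f n).comp (mapChains g n) = mapChains (f ∘ g) n :=
    CR.addHom_ext fun w => by simp [mon, mapChains_single, Function.comp_assoc]
  exact DFunLike.congr_fun this c

theorem mapChains_id {n : ℕ} (c : CR X n) : mapChains id n c = c := by
  have : mapChains (id : X → X) n = AddMonoidHom.id _ :=
    CR.addHom_ext fun w => by simp [mon, mapChains_single]
  exact DFunLike.congr_fun this c

theorem del_cons_zero {n : ℕ} (x : X) (u : Fin (n+1) → X) : del (Fin.cons x u) 0 = u := by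
  funext j; simp [del]

theorem act_cons_zero (op : X → X → X) {n : ℕ} (x : X) (u : Fin (n+1) → X) :
    act op (Fin.cons x u) 0 = op x ∘ u := by
  funext j; simp [act]

theorem del_cons_succ {n : ℕ} (x : X) (u : Fin (n+1) → X) (i : Fin n) :
    del (Fin.cons x u) i.succ = Fin.cons x (del u i) := by
  funext j
  induction j using Fin.cases with
  | zero => simp [del]
  | succ j =>
    simp only [del, Fin.val_succ, Nat.succ_lt_succ_iff, Fin.cons_succ]
    split
    · rw [← Fin.succ_castSucc, Fin.cons_succ]
    · rfl

theorem act_cons_succ (op : X → X → X) {n : ℕ} (x : X) (u : Fin (n+1) → X) (i : Fin n) :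
    act op (Fin.cons x u) i.succ = Fin.cons x (act op u i) := by
  funext j
  induction j using Fin.cases with
  | zero => simp [act]
  | succ j =>
    simp only [act, Fin.val_succ, Nat.succ_lt_succ_iff, Fin.cons_succ]
    split
    · rw [← Fin.succ_castSucc, Fin.cons_succ]
    · rfl

theorem dMon_cons (op : X → X → X) {n : ℕ} (x : X) (u : Fin (n+1) → X) :
    dMon op (Fin.cons x u) = mon u - mon (op x ∘ u) - consHom x n (dMon op u) := by
  rw [dMon, Fin.sum_univ_succ, dMon, map_sum]
  simp only [del_cons_zero, act_cons_zero, del_cons_succ, act_cons_succ, Fin.val_succ,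
    Fin.val_zero, pow_zero, pow_succ, mul_neg_one, one_smul, neg_smul, map_zsmul, map_sub, mon,
    consHom_single, Finset.sum_neg_distrib]
  abel

theorem d_consHom (op : X → X → X) {n : ℕ} (x : X) (c : CR X (n+1)) :
    d op (n+1) (consHom x (n+1) c) = c - mapChains (op x) (n+1) c - consHom x n (d op n c) := by
  have : (d op (n+1)).comp (consHom x (n+1)) =
      AddMonoidHom.id _ - mapChains (op x) (n+1) - (consHom x n).comp (d op n) :=
    CR.addHom_ext fun w => by simp [mon, consHom_single, mapChains_single, d_single, dMon_cons]
  exact DFunLike.congr_fun this c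

noncomputable def chainsStartingIn (T : Set X) (n : ℕ) : AddSubgroup (CR X (n+1)) :=
  (Finsupp.supported ℤ ℤ {w : Fin (n+1) → X | w 0 ∈ T}).toAddSubgroup

theorem mem_chainsStartingIn {T : Set X} {n : ℕ} {c : CR X (n+1)} :
    c ∈ chainsStartingIn T n ↔ ∀ w ∈ c.support, w 0 ∈ T :=
  Finsupp.mem_supported ℤ c

theorem single_mem_chainsStartingIn {T : Set X} {n : ℕ} {w : Fin (n+1) → X} (hw : w 0 ∈ T)
    (a : ℤ) : Finsupp.single w a ∈ chainsStartingIn T n :=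
  Finsupp.single_mem_supported ℤ a hw

theorem consHom_mem_chainsStartingIn {T : Set X} {x : X} (hx : x ∈ T) {n : ℕ} (c : CR X n) :
    consHom x n c ∈ chainsStartingIn T n := by
  induction c using Finsupp.induction_linear with
  | zero => simp
  | add f g hf hg => simpa using add_mem hf hg
  | single w a => simpa [consHom_single] using single_mem_chainsStartingIn (w := Fin.cons x w) hx a

theorem sub_mapChains_mem_sup (op : X → X → X) {T : Set X} {x : X} (hx : x ∈ T) {n : ℕ}
    (c : CR X (n+1)) :
    c - mapChains (op x) (n+1) c ∈ BC op (n+1) ⊔ chainsStartingIn T n := by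
  rw [sub_eq_iff_eq_add.1 (d_consHom op x c).symm]
  exact add_mem (AddSubgroup.mem_sup_left ⟨_, rfl⟩)
    (AddSubgroup.mem_sup_right (consHom_mem_chainsStartingIn hx _))

theorem sub_mapChains_zpow_mem (φ : X ≃ X) {n : ℕ} {S : AddSubgroup (CR X n)}
    (hS : ∀ c, c - mapChains φ n c ∈ S) (k : ℤ) (c : CR X n) :
    c - mapChains ⇑(φ ^ k) n c ∈ S := by
  have step : ∀ j : ℤ, c - mapChains ⇑(φ ^ (j+1)) n c ∈ S ↔ c - mapChains ⇑(φ ^ j) n c ∈ S := by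
    intro j
    have hsplit : c - mapChains ⇑(φ ^ (j+1)) n c = (c - mapChains ⇑(φ ^ j) n c) +
        (mapChains ⇑(φ ^ j) n c - mapChains φ n (mapChains ⇑(φ ^ j) n c)) := by
      rw [mapChains_mapChains, ← Equiv.Perm.coe_mul, ← zpow_one_add, add_comm]
      abel
    rw [hsplit]
    exact AddSubgroup.add_mem_cancel_right _ (hS _)
  induction k using Int.induction_on with
  | zero => simp [mapChains_id]
  | succ j ih => exact (step j).2 ih
  | pred j ih => exact (step _).1 (by simpa using ih)

end RackChains

/-- If `T ⊆ X` meets every orbit of `φ`, then every chain of degree `≥ 1` is, modulo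
boundaries, a `ℤ`-linear combination of monomials whose first entry lies in `T`. -/
theorem chains_start_in_T_mod_boundaries (X : Type) (φ : X ≃ X) (T : Set X)
    (hT : ∀ x : X, ∃ k : ℤ, (φ ^ k) x ∈ T) (n : ℕ) (c : CR X (n+1)) :
    ∃ c' : CR X (n+1), c - c' ∈ BC (permOp φ) (n+1) ∧ ∀ w ∈ c'.support, w 0 ∈ T := by
  suffices c ∈ BC (permOp φ) (n+1) ⊔ chainsStartingIn T n by
    obtain ⟨b, hb, c', hc', rfl⟩ := AddSubgroup.mem_sup.1 this
    exact ⟨c', by simpa using hb, mem_chainsStartingIn.1 hc'⟩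
  induction c using Finsupp.induction_linear with
  | zero => exact zero_mem _
  | add f g hf hg => exact add_mem hf hg
  | single w a =>
    obtain ⟨k, hk⟩ := hT (w 0)
    have hsub := sub_mapChains_zpow_mem φ (sub_mapChains_mem_sup (permOp φ) hk) k
      (Finsupp.single w a)
    have hstart : mapChains ⇑(φ ^ k) (n+1) (Finsupp.single w a) ∈ chainsStartingIn T n := by
      rw [mapChains_single]
      exact single_mem_chainsStartingIn hk a
    simpa using add_mem hsub (AddSubgroup.mem_sup_right hstart)
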